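/- Under the stated block-operator hypotheses, the subspace K0 reduces the operator V V*, satisfies K0 ⊆ ker(A0 − λ) ∩ closure(ran V) and V*(K0) ⊆ ker(A1 − λ), and is maximal with these properties: every closed subspace L0 of H0 that is invariant under V V*, contained in ker(A0 − λ) ∩ closure(ran V), and satisfies V*(L0) ⊆ ker(A1 − λ), is contained in K0. Symmetrically, K1 reduces V* V, satisfies K1 ⊆ ker(A1 − λ) ∩ closure(ran V*) and V(K1) ⊆ ker(A0 − λ), and every closed V* V-invariant subspace L1 ⊆ ker(A1 − λ) ∩ closure(ran V*) with V(L1) ⊆ ker(A0 − λ) is contained in K1. -/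

import Mathlib

open ContinuousLinearMap

variable {H0 H1 : Type*}
  [NormedAddCommGroup H0] [InnerProductSpace ℂ H0] [CompleteSpace H0]
  [NormedAddCommGroup H1] [InnerProductSpace ℂ H1] [CompleteSpace H1]

/-- The (not yet closed) subspace
`{x ∈ ker(A0-λ) ∩ ran V : ∀ n ≥ 0, (V V*)^n x ∈ ker(A0-λ) and V*(V V*)^n x ∈ ker(A1-λ)}`. -/
noncomputable def K0pre (A0 : H0 →L[ℂ] H0) (A1 : H1 →L[ℂ] H1) (V : H1 →L[ℂ] H0) (lam : ℝ) :
    Submodule ℂ H0 :=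
  LinearMap.ker ((A0 - (lam : ℂ) • ContinuousLinearMap.id ℂ H0 : H0 →L[ℂ] H0) : H0 →ₗ[ℂ] H0) ⊓ LinearMap.range (V : H1 →ₗ[ℂ] H0) ⊓
    (⨅ n : ℕ, Submodule.comap
      (((V ∘L ContinuousLinearMap.adjoint V) ^ n : H0 →L[ℂ] H0) : H0 →ₗ[ℂ] H0)
      (LinearMap.ker ((A0 - (lam : ℂ) • ContinuousLinearMap.id ℂ H0 : H0 →L[ℂ] H0) : H0 →ₗ[ℂ] H0))) ⊓
    (⨅ n : ℕ, Submodule.comap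
      ((ContinuousLinearMap.adjoint V ∘L
          ((V ∘L ContinuousLinearMap.adjoint V) ^ n) : H0 →L[ℂ] H1) : H0 →ₗ[ℂ] H1)
      (LinearMap.ker ((A1 - (lam : ℂ) • ContinuousLinearMap.id ℂ H1 : H1 →L[ℂ] H1) : H1 →ₗ[ℂ] H1)))

/-- The subspace `K0`: the closure of `K0pre` in `H0`. -/
noncomputable def K0 (A0 : H0 →L[ℂ] H0) (A1 : H1 →L[ℂ] H1) (V : H1 →L[ℂ] H0) (lam : ℝ) :
    Submodule ℂ H0 :=
  (K0pre A0 A1 V lam).topologicalClosure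

/-- The (not yet closed) subspace
`{y ∈ ker(A1-λ) ∩ ran V* : ∀ n ≥ 0, (V* V)^n y ∈ ker(A1-λ) and V (V* V)^n y ∈ ker(A0-λ)}`. -/
noncomputable def K1pre (A0 : H0 →L[ℂ] H0) (A1 : H1 →L[ℂ] H1) (V : H1 →L[ℂ] H0) (lam : ℝ) :
    Submodule ℂ H1 :=
  LinearMap.ker ((A1 - (lam : ℂ) • ContinuousLinearMap.id ℂ H1 : H1 →L[ℂ] H1) : H1 →ₗ[ℂ] H1) ⊓
    LinearMap.range ((ContinuousLinearMap.adjoint V : H0 →L[ℂ] H1) : H0 →ₗ[ℂ] H1) ⊓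
    (⨅ n : ℕ, Submodule.comap
      (((ContinuousLinearMap.adjoint V ∘L V) ^ n : H1 →L[ℂ] H1) : H1 →ₗ[ℂ] H1)
      (LinearMap.ker ((A1 - (lam : ℂ) • ContinuousLinearMap.id ℂ H1 : H1 →L[ℂ] H1) : H1 →ₗ[ℂ] H1))) ⊓
    (⨅ n : ℕ, Submodule.comap
      ((V ∘L ((ContinuousLinearMap.adjoint V ∘L V) ^ n) : H1 →L[ℂ] H0) : H1 →ₗ[ℂ] H0)
      (LinearMap.ker ((A0 - (lam : ℂ) • ContinuousLinearMap.id ℂ H0 : H0 →L[ℂ] H0) : H0 →ₗ[ℂ] H0)))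

/-- The subspace `K1`: the closure of `K1pre` in `H1`. -/
noncomputable def K1 (A0 : H0 →L[ℂ] H0) (A1 : H1 →L[ℂ] H1) (V : H1 →L[ℂ] H0) (lam : ℝ) :
    Submodule ℂ H1 :=
  (K1pre A0 A1 V lam).topologicalClosure


open scoped ComplexInnerProductSpace

private lemma mem_K0pre_iff' {A0 : H0 →L[ℂ] H0} {A1 : H1 →L[ℂ] H1} {V : H1 →L[ℂ] H0} {lam : ℝ}
    {x : H0} :
    x ∈ K0pre A0 A1 V lam ↔
      x ∈ LinearMap.ker ((A0 - (lam : ℂ) • ContinuousLinearMap.id ℂ H0 : H0 →L[ℂ] H0) : H0 →ₗ[ℂ] H0) ∧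
      x ∈ LinearMap.range (V : H1 →ₗ[ℂ] H0) ∧
      (∀ n : ℕ, ((V ∘L adjoint V) ^ n) x ∈
        LinearMap.ker ((A0 - (lam : ℂ) • ContinuousLinearMap.id ℂ H0 : H0 →L[ℂ] H0) : H0 →ₗ[ℂ] H0)) ∧
      (∀ n : ℕ, adjoint V (((V ∘L adjoint V) ^ n) x) ∈
        LinearMap.ker ((A1 - (lam : ℂ) • ContinuousLinearMap.id ℂ H1 : H1 →L[ℂ] H1) : H1 →ₗ[ℂ] H1)) := by
  simp only [K0pre, Submodule.mem_inf, Submodule.mem_iInf, Submodule.mem_comap, ContinuousLinearMap.coe_coe, ContinuousLinearMap.comp_apply, and_assoc]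

private lemma K0pre_invariant' {A0 : H0 →L[ℂ] H0} {A1 : H1 →L[ℂ] H1} {V : H1 →L[ℂ] H0} {lam : ℝ}
    {x : H0} (hx : x ∈ K0pre A0 A1 V lam) :
    (V ∘L adjoint V) x ∈ K0pre A0 A1 V lam := by
  rw [mem_K0pre_iff'] at hx ⊢
  obtain ⟨h1, h2, h3, h4⟩ := hx
  refine ⟨by simpa using h3 1, ⟨adjoint V x, rfl⟩, fun n => ?_, fun n => ?_⟩
  · have := h3 (n + 1)
    rwa [pow_succ, mul_apply_eq_comp] at this
  · have := h4 (n + 1)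
    rwa [pow_succ, mul_apply_eq_comp] at this

private theorem aux0' (A0 : H0 →L[ℂ] H0) (A1 : H1 →L[ℂ] H1) (V : H1 →L[ℂ] H0) (lam : ℝ) :
    (∀ x ∈ K0 A0 A1 V lam, (V ∘L ContinuousLinearMap.adjoint V) x ∈ K0 A0 A1 V lam) ∧
    (∀ x ∈ (K0 A0 A1 V lam)ᗮ, (V ∘L ContinuousLinearMap.adjoint V) x ∈ (K0 A0 A1 V lam)ᗮ) ∧
    (K0 A0 A1 V lam ≤ LinearMap.ker ((A0 - (lam : ℂ) • ContinuousLinearMap.id ℂ H0 : H0 →L[ℂ] H0) : H0 →ₗ[ℂ] H0) ⊓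
      (LinearMap.range (V : H1 →ₗ[ℂ] H0)).topologicalClosure) ∧
    (∀ x ∈ K0 A0 A1 V lam,
      ContinuousLinearMap.adjoint V x ∈
        LinearMap.ker ((A1 - (lam : ℂ) • ContinuousLinearMap.id ℂ H1 : H1 →L[ℂ] H1) : H1 →ₗ[ℂ] H1)) ∧
    (∀ L0 : Submodule ℂ H0, IsClosed (L0 : Set H0) →
      (∀ x ∈ L0, (V ∘L ContinuousLinearMap.adjoint V) x ∈ L0) →
      L0 ≤ LinearMap.ker ((A0 - (lam : ℂ) • ContinuousLinearMap.id ℂ H0 : H0 →L[ℂ] H0) : H0 →ₗ[ℂ] H0) ⊓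
        (LinearMap.range (V : H1 →ₗ[ℂ] H0)).topologicalClosure →
      (∀ x ∈ L0, ContinuousLinearMap.adjoint V x ∈
        LinearMap.ker ((A1 - (lam : ℂ) • ContinuousLinearMap.id ℂ H1 : H1 →L[ℂ] H1) : H1 →ₗ[ℂ] H1)) →
      L0 ≤ K0 A0 A1 V lam) := by
  set T : H0 →L[ℂ] H0 := V ∘L adjoint V with hT
  have inv : ∀ x ∈ K0 A0 A1 V lam, T x ∈ K0 A0 A1 V lam := by
    have : K0pre A0 A1 V lam ≤ (K0 A0 A1 V lam).comap (T : H0 →ₗ[ℂ] H0) := by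
      intro x hx
      exact Submodule.le_topologicalClosure _ (K0pre_invariant' hx)
    have hcl : IsClosed (((K0 A0 A1 V lam).comap (T : H0 →ₗ[ℂ] H0)) : Set H0) := by
      have heq : (((K0 A0 A1 V lam).comap (T : H0 →ₗ[ℂ] H0)) : Set H0)
          = T ⁻¹' (K0 A0 A1 V lam : Set H0) := rfl
      rw [heq]
      have hcl0 : IsClosed (K0 A0 A1 V lam : Set H0) := by
        unfold K0
        exact Submodule.isClosed_topologicalClosure _
      exact hcl0.preimage T.continuous
    have h2 : K0 A0 A1 V lam ≤ (K0 A0 A1 V lam).comap (T : H0 →ₗ[ℂ] H0) :=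
      Submodule.topologicalClosure_minimal _ this hcl
    exact fun x hx => h2 hx
  refine ⟨inv, ?_, ?_, ?_, ?_⟩
  · intro x hx
    rw [Submodule.mem_orthogonal] at hx ⊢
    intro u hu
    have hadj : adjoint T = T := by
      simp [hT, adjoint_comp, adjoint_adjoint]
    have heq : ⟪u, T x⟫ = ⟪T u, x⟫ := by
      conv_lhs => rw [← hadj]
      exact adjoint_inner_right T u x
    rw [heq]
    exact hx _ (inv u hu)
  · refine Submodule.topologicalClosure_minimal _ ?_ ?_
    · intro x hx
      rw [mem_K0pre_iff'] at hx
      exact ⟨hx.1, Submodule.le_topologicalClosure _ hx.2.1⟩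
    · exact IsClosed.inter (ContinuousLinearMap.isClosed_ker _)
        (LinearMap.range (V : H1 →ₗ[ℂ] H0)).isClosed_topologicalClosure
  · have : K0 A0 A1 V lam ≤ Submodule.comap ((adjoint V : H0 →L[ℂ] H1) : H0 →ₗ[ℂ] H1)
        (LinearMap.ker ((A1 - (lam : ℂ) • ContinuousLinearMap.id ℂ H1 : H1 →L[ℂ] H1) : H1 →ₗ[ℂ] H1)) := by
      refine Submodule.topologicalClosure_minimal _ ?_ ?_
      · intro x hx
        rw [mem_K0pre_iff'] at hx
        simpa using hx.2.2.2 0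
      · have heq : ((Submodule.comap ((adjoint V : H0 →L[ℂ] H1) : H0 →ₗ[ℂ] H1)
            (LinearMap.ker ((A1 - (lam : ℂ) • ContinuousLinearMap.id ℂ H1 : H1 →L[ℂ] H1) : H1 →ₗ[ℂ] H1))) : Set H0)
            = (adjoint V) ⁻¹' (LinearMap.ker
                ((A1 - (lam : ℂ) • ContinuousLinearMap.id ℂ H1 : H1 →L[ℂ] H1) : H1 →ₗ[ℂ] H1) : Set H1) := rfl
        rw [heq]
        exact (ContinuousLinearMap.isClosed_ker _).preimage (adjoint V).continuous
    exact fun x hx => this hx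
  · intro L0 hL0c hL0inv hL0le hL0adj
    have hiter : ∀ x ∈ L0, ∀ n : ℕ, (T ^ n) x ∈ L0 := by
      intro x hx n
      induction n with
      | zero => simpa using hx
      | succ n ih =>
        rw [pow_succ', mul_apply_eq_comp]
        exact hL0inv _ ih
    set M : Submodule ℂ H0 := L0.map (T : H0 →ₗ[ℂ] H0) with hM
    have hMpre : M ≤ K0pre A0 A1 V lam := by
      rintro _ ⟨x, hx, rfl⟩
      rw [mem_K0pre_iff']
      refine ⟨(hL0le (hL0inv x hx)).1, ⟨adjoint V x, rfl⟩, fun n => ?_, fun n => ?_⟩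
      · have := (hL0le (hiter x hx (n + 1))).1
        rwa [pow_succ, mul_apply_eq_comp] at this
      · have := hL0adj _ (hiter x hx (n + 1))
        rwa [pow_succ, mul_apply_eq_comp] at this
    have hML0 : M ≤ L0 := by
      rintro _ ⟨x, hx, rfl⟩
      exact hL0inv x hx
    set N := M.topologicalClosure with hN
    have hNL0 : N ≤ L0 := Submodule.topologicalClosure_minimal _ hML0 hL0c
    haveI : N.HasOrthogonalProjection := by
      haveI := N.isClosed_topologicalClosure.completeSpace_coe
      infer_instance
    intro x hx
    obtain ⟨p, hp, q, hq, hxpq⟩ := N.exists_add_mem_mem_orthogonal x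
    have hqL0 : q ∈ L0 := by
      have : q = x - p := by rw [hxpq]; abel
      rw [this]
      exact L0.sub_mem hx (hNL0 hp)
    have hVq : adjoint V q = 0 := by
      have h0 : ⟪T q, q⟫ = 0 := by
        rw [Submodule.mem_orthogonal] at hq
        exact hq _ (Submodule.le_topologicalClosure _ ⟨q, hqL0, rfl⟩)
      have key := adjoint_inner_left (adjoint V) q ((adjoint V) q)
      rw [adjoint_adjoint] at key
      have hz : (inner ℂ ((adjoint V) q) ((adjoint V) q) : ℂ) = 0 := by
        rw [← key]
        simpa [hT, comp_apply] using h0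
      exact inner_self_eq_zero.mp hz
    have hqorth : q ∈ (LinearMap.range (V : H1 →ₗ[ℂ] H0))ᗮ := by
      rw [Submodule.mem_orthogonal]
      rintro _ ⟨y, rfl⟩
      have key := adjoint_inner_left (adjoint V) q y
      rw [adjoint_adjoint] at key
      rw [ContinuousLinearMap.coe_coe, key, hVq, inner_zero_right]
    have hqcl : q ∈ (LinearMap.range (V : H1 →ₗ[ℂ] H0)).topologicalClosure := by
      have hxc := (hL0le hx).2
      have hpc := (hL0le (hNL0 hp)).2
      have : q = x - p := by rw [hxpq]; abel
      rw [this]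
      exact Submodule.sub_mem _ hxc hpc
    have hq0 : q = 0 := by
      rw [← Submodule.orthogonal_orthogonal_eq_closure] at hqcl
      rw [Submodule.mem_orthogonal] at hqcl
      exact inner_self_eq_zero.mp (hqcl q hqorth)
    have : x = p := by rw [hxpq, hq0, add_zero]
    rw [this]
    exact (Submodule.topologicalClosure_mono hMpre) hp

private lemma K1pre_eq' (A0 : H0 →L[ℂ] H0) (A1 : H1 →L[ℂ] H1) (V : H1 →L[ℂ] H0) (lam : ℝ) :
    K1pre A0 A1 V lam = K0pre A1 A0 (adjoint V) lam := by
  rw [K1pre, K0pre, adjoint_adjoint]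

private lemma K1_eq' (A0 : H0 →L[ℂ] H0) (A1 : H1 →L[ℂ] H1) (V : H1 →L[ℂ] H0) (lam : ℝ) :
    K1 A0 A1 V lam = K0 A1 A0 (adjoint V) lam := by
  rw [K1, K0, K1pre_eq']


/-- **`K0` and `K1` are the maximal reducing subspaces** (Lemma 5.1): `K0`
reduces `V V*`, is contained in `ker(A0-λ) ∩ closure(ran V)` with
`V*(K0) ⊆ ker(A1-λ)`, and contains every closed `V V*`-invariant subspace with
these properties; symmetrically for `K1` and `V* V`. -/
theorem K0_K1_maximal_reducing
    {H0 H1 : Type*}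
    [NormedAddCommGroup H0] [InnerProductSpace ℂ H0] [CompleteSpace H0]
    [NormedAddCommGroup H1] [InnerProductSpace ℂ H1] [CompleteSpace H1]
    [TopologicalSpace.SeparableSpace H0] [TopologicalSpace.SeparableSpace H1]
    (A0 : H0 →L[ℂ] H0) (A1 : H1 →L[ℂ] H1) (V : H1 →L[ℂ] H0) (lam : ℝ)
    (hA0 : IsSelfAdjoint A0) (hA1 : IsSelfAdjoint A1)
    (hspec0 : ∀ z ∈ spectrum ℂ A0, z.re ≤ lam)
    (hspec1 : ∀ z ∈ spectrum ℂ A1, lam ≤ z.re) :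
    (∀ x ∈ K0 A0 A1 V lam, (V ∘L ContinuousLinearMap.adjoint V) x ∈ K0 A0 A1 V lam) ∧
    (∀ x ∈ (K0 A0 A1 V lam)ᗮ, (V ∘L ContinuousLinearMap.adjoint V) x ∈ (K0 A0 A1 V lam)ᗮ) ∧
    (K0 A0 A1 V lam ≤ LinearMap.ker ((A0 - (lam : ℂ) • ContinuousLinearMap.id ℂ H0 : H0 →L[ℂ] H0) : H0 →ₗ[ℂ] H0) ⊓
      (LinearMap.range (V : H1 →ₗ[ℂ] H0)).topologicalClosure) ∧
    (∀ x ∈ K0 A0 A1 V lam,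
      ContinuousLinearMap.adjoint V x ∈
        LinearMap.ker ((A1 - (lam : ℂ) • ContinuousLinearMap.id ℂ H1 : H1 →L[ℂ] H1) : H1 →ₗ[ℂ] H1)) ∧
    (∀ L0 : Submodule ℂ H0, IsClosed (L0 : Set H0) →
      (∀ x ∈ L0, (V ∘L ContinuousLinearMap.adjoint V) x ∈ L0) →
      L0 ≤ LinearMap.ker ((A0 - (lam : ℂ) • ContinuousLinearMap.id ℂ H0 : H0 →L[ℂ] H0) : H0 →ₗ[ℂ] H0) ⊓
        (LinearMap.range (V : H1 →ₗ[ℂ] H0)).topologicalClosure →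
      (∀ x ∈ L0, ContinuousLinearMap.adjoint V x ∈
        LinearMap.ker ((A1 - (lam : ℂ) • ContinuousLinearMap.id ℂ H1 : H1 →L[ℂ] H1) : H1 →ₗ[ℂ] H1)) →
      L0 ≤ K0 A0 A1 V lam) ∧
    (∀ y ∈ K1 A0 A1 V lam, (ContinuousLinearMap.adjoint V ∘L V) y ∈ K1 A0 A1 V lam) ∧
    (∀ y ∈ (K1 A0 A1 V lam)ᗮ, (ContinuousLinearMap.adjoint V ∘L V) y ∈ (K1 A0 A1 V lam)ᗮ) ∧
    (K1 A0 A1 V lam ≤ LinearMap.ker ((A1 - (lam : ℂ) • ContinuousLinearMap.id ℂ H1 : H1 →L[ℂ] H1) : H1 →ₗ[ℂ] H1) ⊓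
      (LinearMap.range ((ContinuousLinearMap.adjoint V : H0 →L[ℂ] H1) : H0 →ₗ[ℂ] H1)).topologicalClosure) ∧
    (∀ y ∈ K1 A0 A1 V lam,
      V y ∈ LinearMap.ker ((A0 - (lam : ℂ) • ContinuousLinearMap.id ℂ H0 : H0 →L[ℂ] H0) : H0 →ₗ[ℂ] H0)) ∧
    (∀ L1 : Submodule ℂ H1, IsClosed (L1 : Set H1) →
      (∀ y ∈ L1, (ContinuousLinearMap.adjoint V ∘L V) y ∈ L1) →
      L1 ≤ LinearMap.ker ((A1 - (lam : ℂ) • ContinuousLinearMap.id ℂ H1 : H1 →L[ℂ] H1) : H1 →ₗ[ℂ] H1) ⊓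
        (LinearMap.range ((ContinuousLinearMap.adjoint V : H0 →L[ℂ] H1) : H0 →ₗ[ℂ] H1)).topologicalClosure →
      (∀ y ∈ L1, V y ∈ LinearMap.ker ((A0 - (lam : ℂ) • ContinuousLinearMap.id ℂ H0 : H0 →L[ℂ] H0) : H0 →ₗ[ℂ] H0)) →
      L1 ≤ K1 A0 A1 V lam) :=  by
  obtain ⟨c1, c2, c3, c4, c5⟩ := aux0' A0 A1 V lam
  obtain ⟨d1, d2, d3, d4, d5⟩ := aux0' A1 A0 (ContinuousLinearMap.adjoint V) lam
  simp only [adjoint_adjoint] at d1 d2 d3 d4 d5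
  simp only [K1_eq']
  exact ⟨c1, c2, c3, c4, c5, d1, d2, d3, d4, d5⟩
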